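/- Let T ∈ F^{N×N}, with N = Σ_{i∈V} n_i, be a nonsingular (invertible) TSS matrix on a finite connected acyclic undirected graph G = (V,E) with rank profile ρ, where the row and column block partitions coincide (m_i = n_i for all i). Then T⁻¹ admits a TSS representation on G with the same rank profile ρ. -/

import Mathlib

open Matrix

attribute [local instance] Classical.propDecidable

namespace TSS

variable {F : Type*} [Field F] {V : Type*} [Fintype V] [DecidableEq V]

/-- The `(i,j)` block of a graph-partitioned matrix. -/
def blockOf {m n : V → ℕ} (T : Matrix ((i : V) × Fin (m i)) ((j : V) × Fin (n j)) F)
    (i j : V) : Matrix (Fin (m i)) (Fin (n j)) F :=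
  fun a b => T ⟨i, a⟩ ⟨j, b⟩

/-- The submatrix `T⟨A,B⟩` of a graph-partitioned matrix. -/
def subBlock {m n : V → ℕ} (T : Matrix ((i : V) × Fin (m i)) ((j : V) × Fin (n j)) F)
    (A B : Set V) :
    Matrix {p : (i : V) × Fin (m i) // p.1 ∈ A} {q : (j : V) × Fin (n j) // q.1 ∈ B} F :=
  T.submatrix (fun p => p.1) (fun q => q.1)

/-- The Hankel block `T⟨Ā,A⟩` induced by `A`. -/
def hankelBlock {m n : V → ℕ} (T : Matrix ((i : V) × Fin (m i)) ((j : V) × Fin (n j)) F)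
    (A : Set V) :
    Matrix {p : (i : V) × Fin (m i) // p.1 ∈ Aᶜ} {q : (j : V) × Fin (n j) // q.1 ∈ A} F :=
  subBlock T Aᶜ A

/-- The number of border edges of `A`: edges of `G` with one endpoint in `A` and the other
outside of `A` (each such undirected edge is counted once, via its orientation out of `A`). -/
noncomputable def edgeCount (G : SimpleGraph V) (A : Set V) : ℕ :=
  Nat.card {e : V × V // e.1 ∈ A ∧ e.2 ∉ A ∧ G.Adj e.1 e.2}

/-- The vertex set of the connected component containing `i` after deleting the edge `{i,j}`. -/
def side (G : SimpleGraph V) (i j : V) : Set V :=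
  {v | (G.deleteEdges {s(i, j)}).Reachable i v}

/-- The unit Hankel block associated with the directed edge `(i,j)`. -/
def unitHankel (G : SimpleGraph V) {m n : V → ℕ}
    (T : Matrix ((i : V) × Fin (m i)) ((j : V) × Fin (n j)) F) (i j : V) :=
  hankelBlock T (side G i j)

/-- `outChain Out Trans k i w j` is the product
`Out^i_{p_{ν−1}} · Trans^{p_{ν−1}}_{i,p_{ν−2}} ⋯ Trans^{k}_{p₁,j}` along the walk
`w : k = p₀ − p₁ − ⋯ − p_ν = i`, with incoming edge `(j,k)`. -/
noncomputable def outChain {G : SimpleGraph V} {m : V → ℕ} {ρ : V → V → ℕ}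
    (Out : ∀ k i : V, Matrix (Fin (m k)) (Fin (ρ i k)) F)
    (Trans : ∀ k i j : V, Matrix (Fin (ρ k i)) (Fin (ρ j k)) F) :
    ∀ (k i : V), G.Walk k i → ∀ j : V, Matrix (Fin (m i)) (Fin (ρ j k)) F
  | k, _, .nil, j => Out k j
  | k, _, .cons (v := k') _ w, j => outChain Out Trans k' _ w k * Trans k k' j

/-- `pathMatrix Inp Trans Out j i w` is the product
`Out^i_{p_{ν−1}} · Trans^{p_{ν−1}}_{i,p_{ν−2}} ⋯ Trans^{p₁}_{p₂,j} · Inp^j_{p₁}` along the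
walk `w : j = p₀ − p₁ − ⋯ − p_ν = i` (and junk `0` for the empty walk). -/
noncomputable def pathMatrix {G : SimpleGraph V} {m n : V → ℕ} {ρ : V → V → ℕ}
    (Inp : ∀ k j : V, Matrix (Fin (ρ k j)) (Fin (n k)) F)
    (Trans : ∀ k i j : V, Matrix (Fin (ρ k i)) (Fin (ρ j k)) F)
    (Out : ∀ k i : V, Matrix (Fin (m k)) (Fin (ρ i k)) F) :
    ∀ (j i : V), G.Walk j i → Matrix (Fin (m i)) (Fin (n j)) F
  | _, _, .nil => 0
  | j, i, .cons (v := p1) _ w => outChain Out Trans p1 i w j * Inp j p1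

/-- A TSS representation of the graph-partitioned matrix `T` on the tree `G`, with
output dimensions `m`, input dimensions `n` and rank profile `ρ` (only the values of the
generators and of `ρ` on (pairs of adjoining) directed edges of `G` are relevant). -/
structure TSSRepr (G : SimpleGraph V) (m n : V → ℕ) (ρ : V → V → ℕ)
    (T : Matrix ((i : V) × Fin (m i)) ((j : V) × Fin (n j)) F) where
  D : ∀ k : V, Matrix (Fin (m k)) (Fin (n k)) F
  Inp : ∀ k j : V, Matrix (Fin (ρ k j)) (Fin (n k)) F
  Trans : ∀ k i j : V, Matrix (Fin (ρ k i)) (Fin (ρ j k)) F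
  Out : ∀ k i : V, Matrix (Fin (m k)) (Fin (ρ i k)) F
  diag : ∀ i : V, blockOf T i i = D i
  offdiag : ∀ {i j : V}, i ≠ j → ∀ w : G.Walk j i, w.IsPath →
      blockOf T i j = pathMatrix Inp Trans Out j i w


/-!
A graph-partitioned matrix on a tree has a TSS representation with rank profile `ρ` exactly
when each unit Hankel block `T⟨side(j,k)ᶜ, side(j,k)⟩` has rank at most `ρ(j,k)`. Every path
from `side(j,k)` to its complement crosses the edge `(j,k)`, so these blocks factor through
`F^ρ(j,k)`. Conversely, writing each of them as `R * C` with the rows of `C` in its row space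
yields the generators: `Out` and `Inp` are blocks of `R` and `C`, and the transitions exist
because `side(j,k) ⊆ side(k,i)`. By the nullity theorem the unit Hankel blocks of `T⁻¹` have
the same ranks as those of `T`.
-/

section RowSpace

open Submodule Set

variable {F : Type*} [Field F] {α β γ : Type*}

theorem _root_.Matrix.span_row_submatrix_le (M : Matrix α β F) (f : γ → α) :
    span F (range (M.submatrix f id).row) ≤ span F (range M.row) :=
  span_mono (range_comp_subset_range f M)

theorem _root_.Matrix.span_row_submatrix_right (M : Matrix α β F) (g : γ → β) :
    span F (range (M.submatrix id g).row) =
      (span F (range M.row)).map (LinearMap.funLeft F F g) := by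
  rw [map_span, ← range_comp]
  rfl

theorem _root_.Matrix.span_row_mul_le [Fintype γ] (A : Matrix α γ F) (B : Matrix γ β F) :
    span F (range (A * B).row) ≤ span F (range B.row) := by
  rw [span_le, ← range_vecMulLinear]
  rintro _ ⟨i, rfl⟩
  exact ⟨A i, rfl⟩

theorem _root_.Matrix.exists_mul_eq_of_span_row_le [Fintype γ] {C : Matrix γ β F}
    {D : Matrix α β F} (h : span F (range D.row) ≤ span F (range C.row)) :
    ∃ X : Matrix α γ F, X * C = D := by
  have hrow : ∀ i, ∃ x, x ᵥ* C = D.row i := fun i => by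
    simpa [← range_vecMulLinear] using h (subset_span (mem_range_self i))
  choose X hX using hrow
  exact ⟨X, ext fun i j => congrFun (hX i) j⟩

theorem _root_.Matrix.exists_mul_eq_of_rank_le [Finite α] [Fintype β] {M : Matrix α β F} {r : ℕ}
    (hr : M.rank ≤ r) : ∃ (R : Matrix α (Fin r) F) (C : Matrix (Fin r) β F),
      M = R * C ∧ span F (range C.row) ≤ span F (range M.row) := by
  set W := span F (range M.row)
  have hd : Module.finrank F W ≤ r := M.rank_eq_finrank_span_row ▸ hr
  let b := Module.finBasis F W
  let C : Matrix (Fin r) β F := fun l =>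
    if h : (l : ℕ) < Module.finrank F W then b ⟨l, h⟩ else 0
  have hCW : span F (range C.row) ≤ W := by
    rw [span_le, range_subset_iff]
    intro l
    by_cases h : (l : ℕ) < Module.finrank F W <;> simp [C, row, h]
  have hWC : W ≤ span F (range C.row) :=
    calc W = span F (range (W.subtype ∘ b)) := by
          rw [range_comp, ← map_span, b.span_eq, map_subtype_top]
      _ ≤ span F (range C.row) :=
          span_mono <| range_subset_iff.2 fun m =>
            ⟨Fin.castLE hd m, by simp [C, row, Fin.castLE]⟩
  obtain ⟨R, hR⟩ := exists_mul_eq_of_span_row_le hWC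
  exact ⟨R, C, hR.symm, hCW⟩

end RowSpace

section Nullity

variable {F : Type*} [Field F] {ι : Type*} [Fintype ι] [DecidableEq ι]
  (p : ι → Prop) [DecidablePred p] {S U : Matrix ι ι F}

/- By the block form of `U * S = 1`, `x ↦ S⟨p,p⟩ x` maps the kernel of `S⟨¬p,p⟩` into that of
`U⟨¬p,p⟩`, with left inverse `x ↦ U⟨p,p⟩ x` there. -/
theorem _root_.Matrix.finrank_ker_toBlock_le (hUS : U * S = 1) :
    Module.finrank F (LinearMap.ker (S.toBlock (fun i => ¬ p i) p).mulVecLin) ≤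
      Module.finrank F (LinearMap.ker (U.toBlock (fun i => ¬ p i) p).mulVecLin) := by
  have hoff : U.toBlock (fun i => ¬ p i) p * S.toBlock p p +
      U.toBlock (fun i => ¬ p i) (fun i => ¬ p i) * S.toBlock (fun i => ¬ p i) p = 0 := by
    rw [← toBlock_mul_eq_add, hUS, toBlock_one_disjoint]
    exact disjoint_compl_left
  have hdiag : U.toBlock p p * S.toBlock p p +
      U.toBlock p (fun i => ¬ p i) * S.toBlock (fun i => ¬ p i) p = 1 := by
    rw [← toBlock_mul_eq_add, hUS, toBlock_one_self]
  have hker : ∀ x ∈ LinearMap.ker (S.toBlock (fun i => ¬ p i) p).mulVecLin,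
      S.toBlock p p *ᵥ x ∈ LinearMap.ker (U.toBlock (fun i => ¬ p i) p).mulVecLin := by
    intro x hx
    rw [LinearMap.mem_ker, mulVecLin_apply] at hx ⊢
    rw [mulVec_mulVec, eq_neg_of_add_eq_zero_left hoff, neg_mulVec, ← mulVec_mulVec, hx,
      mulVec_zero, neg_zero]
  have hinv : ∀ x ∈ LinearMap.ker (S.toBlock (fun i => ¬ p i) p).mulVecLin,
      U.toBlock p p *ᵥ (S.toBlock p p *ᵥ x) = x := by
    intro x hx
    rw [LinearMap.mem_ker, mulVecLin_apply] at hx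
    rw [mulVec_mulVec, eq_sub_of_add_eq hdiag, sub_mulVec, ← mulVec_mulVec, hx, mulVec_zero,
      one_mulVec, sub_zero]
  refine LinearMap.finrank_le_finrank_of_injective
    (f := (S.toBlock p p).mulVecLin.restrict hker) fun x y hxy => Subtype.ext ?_
  rw [← hinv x x.2, ← hinv y y.2]
  exact congrArg (fun z => U.toBlock p p *ᵥ z) (congrArg Subtype.val hxy)

theorem _root_.Matrix.rank_toBlock_compl_eq_of_mul_eq_one (hUS : U * S = 1) (hSU : S * U = 1) :
    (S.toBlock (fun i => ¬ p i) p).rank = (U.toBlock (fun i => ¬ p i) p).rank := by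
  have hS := (S.toBlock (fun i => ¬ p i) p).mulVecLin.finrank_range_add_finrank_ker
  have hU := (U.toBlock (fun i => ¬ p i) p).mulVecLin.finrank_range_add_finrank_ker
  have := (finrank_ker_toBlock_le p hUS).antisymm (finrank_ker_toBlock_le p hSU)
  unfold rank
  omega

end Nullity

open SimpleGraph

section Sides

variable {V : Type*} {G : SimpleGraph V} {i j k v : V}

theorem self_mem_side (i j : V) : i ∈ side G i j := Reachable.refl i

theorem reachable_deleteEdges_of_notMem_support {a b x : V} (w : G.Walk a b)
    (hx : x ∉ w.support) (y : V) : (G.deleteEdges {s(y, x)}).Reachable a b := by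
  refine ⟨w.toDeleteEdges _ fun e he hey => hx ?_⟩
  rw [Set.mem_singleton_iff] at hey
  exact w.snd_mem_support_of_mem_edges (hey ▸ he)

theorem notMem_side_of_adj (hG : G.IsTree) (h : G.Adj i j) : j ∉ side G i j :=
  isBridge_iff.mp (isAcyclic_iff_forall_adj_isBridge.mp hG.isAcyclic h)

theorem notMem_side_of_mem_side (hG : G.IsTree) (h : G.Adj i j) (hv : v ∈ side G i j) :
    v ∉ side G j i := by
  intro hv'
  change (G.deleteEdges {s(j, i)}).Reachable j v at hv'
  rw [Sym2.eq_swap] at hv'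
  exact notMem_side_of_adj hG h (hv.trans hv'.symm)

theorem mem_side_or_mem_side (hG : G.IsTree) (h : G.Adj i j) (v : V) :
    v ∈ side G i j ∨ v ∈ side G j i := by
  obtain ⟨P, hP⟩ := hG.connected.exists_isPath v i
  by_cases hj : j ∈ P.support
  · have hi := Walk.endpoint_notMem_support_takeUntil hP hj h.ne
    exact .inr (reachable_deleteEdges_of_notMem_support (P.takeUntil j hj) hi j).symm
  · exact .inl (reachable_deleteEdges_of_notMem_support P hj i).symm

theorem compl_side (hG : G.IsTree) (h : G.Adj i j) : (side G i j)ᶜ = side G j i :=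
  Set.ext fun v => ⟨(mem_side_or_mem_side hG h v).resolve_left,
    fun hv hv' => notMem_side_of_mem_side hG h hv' hv⟩

theorem side_subset_side (hG : G.IsTree) (hjk : G.Adj j k) (hij : i ≠ j) :
    side G j k ⊆ side G k i := by
  rintro v ⟨w⟩
  have hk : k ∉ w.support := fun hk => notMem_side_of_adj hG hjk ⟨w.takeUntil k hk⟩
  have hkj : (G.deleteEdges {s(k, i)}).Adj k j := by simpa [hij.symm, hjk.ne] using hjk.symm
  have hjv := reachable_deleteEdges_of_notMem_support (w.mapLe (G.deleteEdges_le _))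
    (by rwa [Walk.support_mapLe_eq_support]) i
  rw [Sym2.eq_swap] at hjv
  exact hkj.reachable.trans hjv

theorem exists_isPath_support_subset_side (hv : v ∈ side G j k) :
    ∃ w : G.Walk v j, w.IsPath ∧ ∀ x ∈ w.support, x ∈ side G j k := by
  obtain ⟨w⟩ := hv
  refine ⟨w.toPath.1.reverse.mapLe (G.deleteEdges_le _), w.toPath.2.reverse.mapLe _, ?_⟩
  intro x hx
  rw [Walk.support_mapLe_eq_support, Walk.support_reverse, List.mem_reverse] at hx
  exact ⟨w.toPath.1.takeUntil x hx⟩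

theorem isPath_append_cons_of_support_subset_side (hG : G.IsTree) {q p : V} (h : G.Adj j k)
    {w₁ : G.Walk q j} {w₂ : G.Walk k p} (h₁ : w₁.IsPath) (h₂ : w₂.IsPath)
    (hs₁ : ∀ x ∈ w₁.support, x ∈ side G j k) (hs₂ : ∀ x ∈ w₂.support, x ∈ side G k j) :
    (w₁.append (.cons h w₂)).IsPath := by
  rw [Walk.isPath_def, Walk.support_append, Walk.support_cons, List.tail_cons]
  exact h₁.support_nodup.append h₂.support_nodup fun x hx₁ hx₂ =>
    notMem_side_of_mem_side hG h (hs₁ x hx₁) (hs₂ x hx₂)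

end Sides

section Representation

variable {F : Type*} [Field F] {V : Type*} {G : SimpleGraph V}
  {m n : V → ℕ} {ρ : V → V → ℕ}

theorem exists_outChain_append_eq (Out : ∀ k i : V, Matrix (Fin (m k)) (Fin (ρ i k)) F)
    (Trans : ∀ k i j : V, Matrix (Fin (ρ k i)) (Fin (ρ j k)) F) {a x x' : V} (h : G.Adj x x')
    (w₁ : G.Walk a x) (c : V) :
    ∃ Y : Matrix (Fin (ρ x x')) (Fin (ρ c a)) F, ∀ p (w₂ : G.Walk x' p),
      outChain Out Trans a p (w₁.append (.cons h w₂)) c = outChain Out Trans x' p w₂ x * Y := by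
  induction w₁ generalizing c with
  | nil => exact ⟨Trans _ x' c, fun _ _ => rfl⟩
  | @cons a a₁ _ _ w₁ ih =>
    obtain ⟨Y, hY⟩ := ih h a
    refine ⟨Y * Trans a a₁ c, fun p w₂ => ?_⟩
    simp only [Walk.cons_append, outChain, hY, Matrix.mul_assoc]

theorem exists_pathMatrix_append_eq (Inp : ∀ k j : V, Matrix (Fin (ρ k j)) (Fin (n k)) F)
    (Trans : ∀ k i j : V, Matrix (Fin (ρ k i)) (Fin (ρ j k)) F)
    (Out : ∀ k i : V, Matrix (Fin (m k)) (Fin (ρ i k)) F) {q j k : V} (h : G.Adj j k)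
    (w₁ : G.Walk q j) :
    ∃ Y : Matrix (Fin (ρ j k)) (Fin (n q)) F, ∀ p (w₂ : G.Walk k p),
      pathMatrix Inp Trans Out q p (w₁.append (.cons h w₂)) = outChain Out Trans k p w₂ j * Y := by
  cases w₁ with
  | nil => exact ⟨Inp _ k, fun _ _ => rfl⟩
  | @cons _ q₁ _ _ w₁ =>
    obtain ⟨Y, hY⟩ := exists_outChain_append_eq Out Trans h w₁ q
    refine ⟨Y * Inp q q₁, fun p w₂ => ?_⟩
    simp only [Walk.cons_append, pathMatrix, hY, Matrix.mul_assoc]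

theorem TSSRepr.rank_unitHankel_le [Fintype V]
    {T : Matrix ((i : V) × Fin (m i)) ((j : V) × Fin (n j)) F} (R : TSSRepr G m n ρ T)
    (hG : G.IsTree) {j k : V} (h : G.Adj j k) :
    (unitHankel G T j k).rank ≤ ρ j k := by
  choose w₁ hw₁ hs₁ using fun c : {q : (i : V) × Fin (n i) // q.1 ∈ side G j k} =>
    exists_isPath_support_subset_side c.2
  choose w₂ hw₂ hs₂ using fun r : {p : (i : V) × Fin (m i) // p.1 ∈ (side G j k)ᶜ} =>
    exists_isPath_support_subset_side (by rw [← compl_side hG h]; exact r.2)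
  choose Y hY using fun c => exists_pathMatrix_append_eq R.Inp R.Trans R.Out h (w₁ c)
  have hfac : unitHankel G T j k =
      Matrix.of (fun r l => outChain R.Out R.Trans k _ (w₂ r).reverse j r.1.2 l) *
        Matrix.of (fun l c => Y c l c.1.2) := by
    ext r c
    have hpath := isPath_append_cons_of_support_subset_side hG h (hw₁ c) (hw₂ r).reverse
      (hs₁ c) (fun x hx => hs₂ r x (by simpa using hx))
    have hne : r.1.1 ≠ c.1.1 := fun he => r.2 (he ▸ c.2)
    have := congrFun (congrFun (R.offdiag hne _ hpath) r.1.2) c.1.2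
    rwa [hY] at this
  rw [hfac]
  exact (Matrix.rank_mul_le_right _ _).trans ((Matrix.rank_le_card_height _).trans_eq
    (Fintype.card_fin _))

open Submodule Set in
theorem exists_mul_eq_submatrix_of_subset
    {T : Matrix ((i : V) × Fin (m i)) ((j : V) × Fin (n j)) F} {A B : Set V} (hAB : A ⊆ B)
    {r r' : ℕ} {R : Matrix {p : (i : V) × Fin (m i) // p.1 ∈ Aᶜ} (Fin r) F}
    {C : Matrix (Fin r) {q : (i : V) × Fin (n i) // q.1 ∈ A} F} (hRC : hankelBlock T A = R * C)
    {C' : Matrix (Fin r') {q : (i : V) × Fin (n i) // q.1 ∈ B} F}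
    (hC' : span F (range C'.row) ≤ span F (range (hankelBlock T B).row)) :
    ∃ X : Matrix (Fin r') (Fin r) F,
      X * C = C'.submatrix id (Subtype.map id fun _ h => hAB h) := by
  apply Matrix.exists_mul_eq_of_span_row_le
  calc span F (range (C'.submatrix id (Subtype.map id fun _ h => hAB h)).row)
      ≤ span F (range
          ((hankelBlock T B).submatrix id (Subtype.map id fun _ h => hAB h)).row) := by
        rw [Matrix.span_row_submatrix_right, Matrix.span_row_submatrix_right]
        exact map_mono hC'
    _ = span F (range ((hankelBlock T A).submatrix
          (Subtype.map id fun _ h hA => h (hAB hA)) id).row) := rfl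
    _ ≤ span F (range (R * C).row) := hRC ▸ Matrix.span_row_submatrix_le _ _
    _ ≤ span F (range C.row) := Matrix.span_row_mul_le R C

theorem outChain_mul_apply_of_isPath {T : Matrix ((i : V) × Fin (m i)) ((j : V) × Fin (n j)) F}
    (hG : G.IsTree) (Out : ∀ k i : V, Matrix (Fin (m k)) (Fin (ρ i k)) F)
    (Trans : ∀ k i j : V, Matrix (Fin (ρ k i)) (Fin (ρ j k)) F)
    (C : ∀ j k : V, G.Adj j k →
      Matrix (Fin (ρ j k)) {q : (i : V) × Fin (n i) // q.1 ∈ side G j k} F)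
    (hOut : ∀ j k (h : G.Adj j k) a q, (Out k j * C j k h) a q = T ⟨k, a⟩ q.1)
    (hTrans : ∀ i j k (hjk : G.Adj j k) (hki : G.Adj k i) (hij : i ≠ j),
      Trans k i j * C j k hjk =
        (C k i hki).submatrix id (Subtype.map id fun _ h => side_subset_side hG hjk hij h))
    {k i : V} (w : G.Walk k i) {j : V} (hjk : G.Adj j k) (hw : (Walk.cons hjk w).IsPath) (a q) :
    (outChain Out Trans k i w j * C j k hjk) a q = T ⟨i, a⟩ q.1 := by
  induction w generalizing j with
  | nil => exact hOut j _ hjk a q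
  | @cons k k' _ hkk' w ih =>
    have hk'j : k' ≠ j := by
      rintro rfl
      exact ((Walk.cons_isPath_iff _ _).mp hw).2 (by simp)
    simp only [outChain, Matrix.mul_assoc, hTrans _ _ _ hjk hkk' hk'j]
    exact ih hkk' hw.of_cons a _

theorem nonempty_tssRepr_of_rank_unitHankel_le [Fintype V]
    {T : Matrix ((i : V) × Fin (m i)) ((j : V) × Fin (n j)) F} (hG : G.IsTree)
    (hrank : ∀ j k, G.Adj j k → (unitHankel G T j k).rank ≤ ρ j k) :
    Nonempty (TSSRepr G m n ρ T) := by
  choose R C hRC hC using fun j k (h : G.Adj j k) =>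
    Matrix.exists_mul_eq_of_rank_le (hrank j k h)
  choose X hX using fun k i j (h : G.Adj j k ∧ G.Adj k i ∧ i ≠ j) =>
    exists_mul_eq_submatrix_of_subset (side_subset_side hG h.1 h.2.2) (hRC j k h.1)
      (hC k i h.2.1)
  let Inp : ∀ k j : V, Matrix (Fin (ρ k j)) (Fin (n k)) F := fun k j =>
    if h : G.Adj k j then (C k j h).submatrix id fun b => ⟨⟨k, b⟩, self_mem_side k j⟩ else 0
  let Trans : ∀ k i j : V, Matrix (Fin (ρ k i)) (Fin (ρ j k)) F := fun k i j =>
    if h : G.Adj j k ∧ G.Adj k i ∧ i ≠ j then X k i j h else 0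
  let Out : ∀ k i : V, Matrix (Fin (m k)) (Fin (ρ i k)) F := fun k i =>
    if h : G.Adj i k then
      (R i k h).submatrix
        (fun a => ⟨⟨k, a⟩, notMem_side_of_mem_side hG h.symm (self_mem_side k i)⟩) id
    else 0
  have hOut : ∀ j k (h : G.Adj j k) a q, (Out k j * C j k h) a q = T ⟨k, a⟩ q.1 := by
    intro j k h a q
    simp only [Out, dif_pos h]
    exact (congrFun (congrFun (hRC j k h) _) q).symm
  have hTrans : ∀ i j k (hjk : G.Adj j k) (hki : G.Adj k i) (hij : i ≠ j),
      Trans k i j * C j k hjk =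
        (C k i hki).submatrix id (Subtype.map id fun _ h => side_subset_side hG hjk hij h) := by
    intro i j k hjk hki hij
    simp only [Trans, dif_pos (show G.Adj j k ∧ G.Adj k i ∧ i ≠ j from ⟨hjk, hki, hij⟩)]
    exact hX k i j _
  refine ⟨⟨fun k => blockOf T k k, Inp, Trans, Out, fun _ => rfl, ?_⟩⟩
  rintro i j hij (_ | ⟨h, w⟩) hw
  · exact absurd rfl hij
  ext a b
  simp only [pathMatrix, Inp, dif_pos h]
  exact (outChain_mul_apply_of_isPath hG Out Trans C hOut hTrans w h hw a ⟨⟨j, b⟩, _⟩).symm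

theorem rank_hankelBlock_inv [Fintype V] [DecidableEq V]
    {T : Matrix ((i : V) × Fin (n i)) ((j : V) × Fin (n j)) F} (hT : IsUnit T) (A : Set V) :
    (hankelBlock T⁻¹ A).rank = (hankelBlock T A).rank :=
  have hdet := (Matrix.isUnit_iff_isUnit_det T).mp hT
  Matrix.rank_toBlock_compl_eq_of_mul_eq_one (fun q : (i : V) × Fin (n i) => q.1 ∈ A)
    (T.mul_nonsing_inv hdet) (T.nonsing_inv_mul hdet)

end Representation

/-- TSS inverse: if `T` is an invertible TSS matrix on a tree `G` with rank
profile `ρ` (with identical row and column block partitions), then `T⁻¹` admits a TSS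
representation on `G` with the same rank profile `ρ`. -/
theorem tss_inv {F : Type*} [Field F] {V : Type*} [Fintype V] [DecidableEq V]
    (G : SimpleGraph V) (hG : G.IsTree) (n : V → ℕ) (ρ : V → V → ℕ)
    (T : Matrix ((i : V) × Fin (n i)) ((j : V) × Fin (n j)) F)
    (hT : IsUnit T) (h : Nonempty (TSSRepr G n n ρ T)) :
    Nonempty (TSSRepr G n n ρ T⁻¹) := by
  obtain ⟨R⟩ := h
  refine nonempty_tssRepr_of_rank_unitHankel_le hG fun j k hjk => ?_
  rw [unitHankel, rank_hankelBlock_inv hT]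
  exact R.rank_unitHankel_le hG hjk

end TSS
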